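/- Typability from CP to 4Dfun: if Γ ⊢_CP e : τ ⟨μ₁⟩ α ⟨μ₂⟩ β in the 1CPS type system for control/prompt with trails, then for any 4Dfun type γ, Γ* ⊢_4Dfun e : τ* ⟨μ₁*, (α* → γ)⟩ γ ⟨μ₂*, (β* → γ)⟩ γ, where * is the translation that fixes every meta-continuation answer type to γ. -/
import Mathlib


namespace CP2FD

/- Source language: λ-calculus with numbers and control/prompt. -/
inductive Tm : Type
  | var : ℕ → Tm
  | num : ℕ → Tm
  | lam : Tm → Tm
  | app : Tm → Tm → Tm
  | control : Tm → Tm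
  | prompt : Tm → Tm

/- CP (1CPS with trails) types: nat, or (τ1 → τ2) ⟨μα⟩ α ⟨μβ⟩ β. -/
mutual
inductive CPTy : Type
  | nat : CPTy
  | arr : CPTy → CPTy → CPTr → CPTy → CPTr → CPTy → CPTy
inductive CPTr : Type
  | empty : CPTr
  | tr : CPTy → CPTr → CPTy → CPTr
end

inductive CompatibleCP : CPTr → CPTr → CPTr → Prop
  | leftEmpty (μ : CPTr) : CompatibleCP .empty μ μ
  | rightEmpty (μ : CPTr) : CompatibleCP μ .empty μ
  | cons {τ1 : CPTy} {μ1 : CPTr} {τ1' τ2 : CPTy} {μ2 : CPTr} {τ2' : CPTy} {μ3 : CPTr} :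
      CompatibleCP (.tr τ2 μ2 τ2') μ3 μ1 →
      CompatibleCP (.tr τ1 μ1 τ1') (.tr τ2 μ2 τ2') (.tr τ1 μ3 τ1')

inductive IdContCP : CPTy → CPTr → CPTy → Prop
  | idEmpty (γ : CPTy) : IdContCP γ .empty γ
  | idTrail (γ γ' : CPTy) : IdContCP γ (.tr γ .empty γ') γ'

/-- Cong et al.'s type system for control/prompt: Γ ⊢ e : τ ⟨μ₁⟩ α ⟨μ₂⟩ β. -/
inductive CPHasTy : List CPTy → Tm → CPTy → CPTr → CPTy → CPTr → CPTy → Prop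
  | var {Γ : List CPTy} {x : ℕ} {τ : CPTy} {μ : CPTr} {α : CPTy} :
      Γ[x]? = some τ → CPHasTy Γ (.var x) τ μ α μ α
  | num {Γ : List CPTy} {n : ℕ} {μ : CPTr} {α : CPTy} : CPHasTy Γ (.num n) .nat μ α μ α
  | lam {Γ : List CPTy} {e : Tm} {τ1 τ2 : CPTy} {μα : CPTr} {a : CPTy} {μβ : CPTr} {b : CPTy}
      {μ : CPTr} {γ : CPTy} :
      CPHasTy (τ1 :: Γ) e τ2 μα a μβ b →
      CPHasTy Γ (.lam e) (.arr τ1 τ2 μα a μβ b) μ γ μ γ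
  | app {Γ : List CPTy} {e1 e2 : Tm} {τ1 τ2 : CPTy} {μα : CPTr} {a : CPTy} {μβ : CPTr}
      {b : CPTy} {μγ : CPTr} {γ : CPTy} {μδ : CPTr} {δ : CPTy} :
      CPHasTy Γ e1 (.arr τ1 τ2 μα a μβ b) μγ γ μδ δ →
      CPHasTy Γ e2 τ1 μβ b μγ γ →
      CPHasTy Γ (.app e1 e2) τ2 μα a μδ δ
  | prompt {Γ : List CPTy} {e : Tm} {γ : CPTy} {μid : CPTr} {γ' β : CPTy} {μ : CPTr}
      {α : CPTy} :
      IdContCP γ μid γ' →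
      CPHasTy Γ e γ μid γ' .empty β →
      CPHasTy Γ (.prompt e) β μ α μ α
  | control {Γ : List CPTy} {e : Tm} {γ : CPTy} {μid : CPTr} {γ' τ τ1 : CPTy} {μ1 : CPTr}
      {τ2 : CPTy} {μ2 μ3 μα : CPTr} {α : CPTy} {μβ : CPTr} {β : CPTy} :
      IdContCP γ μid γ' →
      CompatibleCP (.tr τ1 μ1 τ2) μ2 μ3 →
      CompatibleCP μβ μ3 μα →
      CPHasTy ((.arr τ τ1 μ1 τ2 μ2 α) :: Γ) e γ μid γ' .empty β →
      CPHasTy Γ (.control e) τ μα α μβ β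

/- 4Dfun types (2CPS with trails and functional meta continuations). -/
mutual
inductive FTy : Type
  | nat : FTy
  | arr : FTy → FTy → FTr → FM → FTy → FTr → FM → FTy → FTy
inductive FTr : Type
  | empty : FTr
  | tr : FTy → FTr → FM → FTy → FTr
inductive FM : Type
  | empty : FM
  | fn : FTy → FTy → FM
end

inductive CompatibleF : FTr → FTr → FTr → Prop
  | leftEmpty (μ : FTr) : CompatibleF .empty μ μ
  | rightEmpty (μ : FTr) : CompatibleF μ .empty μ
  | cons {τ1 : FTy} {μ1 : FTr} {σ1 : FM} {τ1' τ2 : FTy} {μ2 : FTr} {σ2 : FM} {τ2' : FTy}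
      {μ3 : FTr} :
      CompatibleF (.tr τ2 μ2 σ2 τ2') μ3 μ1 →
      CompatibleF (.tr τ1 μ1 σ1 τ1') (.tr τ2 μ2 σ2 τ2') (.tr τ1 μ3 σ1 τ1')

inductive IdContTypeF : FTy → FTr → FM → FTy → Prop
  | idEmpty (γ : FTy) : IdContTypeF γ .empty .empty γ
  | idTrail (γ : FTy) (σ : FM) (γ' : FTy) : IdContTypeF γ (.tr γ .empty σ γ') σ γ'
  | idMeta (γ γ' : FTy) : IdContTypeF γ .empty (.fn γ γ') γ'

/-- The 4Dfun type system (control/prompt fragment):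
    Γ ⊢ e : τ ⟨μα, σα⟩ α ⟨μβ, σβ⟩ β. -/
inductive FHasTy : List FTy → Tm → FTy → FTr → FM → FTy → FTr → FM → FTy → Prop
  | var {Γ : List FTy} {x : ℕ} {τ : FTy} {μ : FTr} {σ : FM} {α : FTy} :
      Γ[x]? = some τ → FHasTy Γ (.var x) τ μ σ α μ σ α
  | num {Γ : List FTy} {n : ℕ} {μ : FTr} {σ : FM} {α : FTy} :
      FHasTy Γ (.num n) .nat μ σ α μ σ α
  | lam {Γ : List FTy} {e : Tm} {τ1 τ2 : FTy} {μα : FTr} {σα : FM} {a : FTy} {μβ : FTr}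
      {σβ : FM} {b : FTy} {μ : FTr} {σ : FM} {γ : FTy} :
      FHasTy (τ1 :: Γ) e τ2 μα σα a μβ σβ b →
      FHasTy Γ (.lam e) (.arr τ1 τ2 μα σα a μβ σβ b) μ σ γ μ σ γ
  | app {Γ : List FTy} {e1 e2 : Tm} {τ1 τ2 : FTy} {μα : FTr} {σα : FM} {a : FTy} {μβ : FTr}
      {σβ : FM} {b : FTy} {μγ : FTr} {σγ : FM} {γ : FTy} {μδ : FTr} {σδ : FM} {δ : FTy} :
      FHasTy Γ e1 (.arr τ1 τ2 μα σα a μβ σβ b) μγ σγ γ μδ σδ δ →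
      FHasTy Γ e2 τ1 μβ σβ b μγ σγ γ →
      FHasTy Γ (.app e1 e2) τ2 μα σα a μδ σδ δ
  | prompt {Γ : List FTy} {e : Tm} {γ : FTy} {μid : FTr} {σid : FM} {γ' τ : FTy} {σα : FM}
      {α β : FTy} {μ : FTr} :
      IdContTypeF γ μid σid γ' →
      FHasTy Γ e γ μid σid γ' .empty (.fn τ α) β →
      FHasTy Γ (.prompt e) τ μ σα α μ σα β
  | control {Γ : List FTy} {e : Tm} {γ : FTy} {μid : FTr} {σid : FM} {γ' τ τ1 : FTy} {μ1 : FTr}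
      {σ1 : FM} {τ2 : FTy} {μ2 μ3 μα : FTr} {σα : FM} {α : FTy} {μβ : FTr} {σβ : FM} {β : FTy} :
      IdContTypeF γ μid σid γ' →
      CompatibleF (.tr τ1 μ1 σ1 τ2) μ2 μ3 →
      CompatibleF μβ μ3 μα →
      FHasTy ((.arr τ τ1 μ1 σ1 τ2 μ2 σα α) :: Γ) e γ μid σid γ' .empty σβ β →
      FHasTy Γ (.control e) τ μα σα α μβ σβ β

/- The type-level translation * from CP types and trail types to 4Dfun ones,
   fixing every meta-continuation answer type to γ. -/
mutual
def cpF (γ : FTy) : CPTy → FTy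
  | .nat => .nat
  | .arr t1 t2 μa a μb b =>
      .arr (cpF γ t1) (cpF γ t2) (cpTrF γ μa) (.fn (cpF γ a) γ) γ (cpTrF γ μb)
        (.fn (cpF γ b) γ) γ
def cpTrF (γ : FTy) : CPTr → FTr
  | .empty => .empty
  | .tr t1 μ t2 => .tr (cpF γ t1) (cpTrF γ μ) (.fn (cpF γ t2) γ) γ
end


lemma compat_to_F (γ : FTy) {μ1 μ2 μ3 : CPTr} (h : CompatibleCP μ1 μ2 μ3) :
    CompatibleF (cpTrF γ μ1) (cpTrF γ μ2) (cpTrF γ μ3) := by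
  induction h with
  | leftEmpty μ => exact .leftEmpty _
  | rightEmpty μ => exact .rightEmpty _
  | cons _ ih => exact .cons ih

lemma idcont_to_F (γ : FTy) {g : CPTy} {μid : CPTr} {g' : CPTy} (h : IdContCP g μid g') :
    IdContTypeF (cpF γ g) (cpTrF γ μid) (.fn (cpF γ g') γ) γ := by
  cases h with
  | idEmpty => exact .idMeta _ _
  | idTrail => exact .idTrail _ _ _

/-- Typability from CP to 4Dfun: if Γ ⊢_CP e : τ ⟨μ₁⟩ α ⟨μ₂⟩ β, then for any
    4Dfun type γ, Γ* ⊢_4Dfun e : τ* ⟨μ₁*, (α* → γ)⟩ γ ⟨μ₂*, (β* → γ)⟩ γ. -/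
theorem cp_to_4dfun {Γ : List CPTy} {e : Tm} {τ : CPTy} {μ1 : CPTr} {α : CPTy} {μ2 : CPTr}
    {β : CPTy} (h : CPHasTy Γ e τ μ1 α μ2 β) (γ : FTy) :
    FHasTy (Γ.map (cpF γ)) e (cpF γ τ) (cpTrF γ μ1) (.fn (cpF γ α) γ) γ (cpTrF γ μ2)
      (.fn (cpF γ β) γ) γ := by
  induction h generalizing γ with
  | var hx => exact .var (by simp [hx])
  | num => exact .num
  | lam _ ih => exact .lam (ih γ)
  | app _ _ ih1 ih2 => exact .app (ih1 γ) (ih2 γ)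
  | prompt hid _ ih => exact .prompt (idcont_to_F γ hid) (ih γ)
  | control hid hc1 hc2 _ ih =>
      exact .control (idcont_to_F γ hid) (compat_to_F γ hc1) (compat_to_F γ hc2) (ih γ)

end CP2FD
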